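/- For bases A, B of a matroid M on a linearly ordered set E, the following are equivalent: (1) A \ IA(A) ⊆ B; (2) A \ IA(A) ⊆ B \ IA(B). (This common condition defines the internal order A ≤_int B on bases.) -/

import Mathlib

open Set

variable {α : Type*}

/-- A circuit of a matroid: a minimal dependent set. -/
def Matroid.Cct (M : Matroid α) (C : Set α) : Prop :=
  M.Dep C ∧ ∀ D ⊂ C, ¬ M.Dep D

/-- The externally active elements with respect to `S`: elements `e ∈ E \ S` that are the
maximum of some circuit contained in `S ∪ {e}`. -/
def Matroid.exA [LinearOrder α] (M : Matroid α) (S : Set α) : Set α :=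
  {e | e ∈ M.E \ S ∧ ∃ C, M.Cct C ∧ C ⊆ insert e S ∧ ∀ f ∈ C, f ≤ e}

/-- The externally passive elements with respect to `S`. -/
def Matroid.exP [LinearOrder α] (M : Matroid α) (S : Set α) : Set α :=
  (M.E \ S) \ M.exA S

/-- The internally active elements with respect to `S`: elements of `S` that are externally
active with respect to `E \ S` in the dual matroid. -/
def Matroid.inA [LinearOrder α] (M : Matroid α) (S : Set α) : Set α :=
  {i | i ∈ S ∧ i ∈ M✶.exA (M.E \ S)}

/-- The internally passive elements with respect to `S`. -/
def Matroid.inP [LinearOrder α] (M : Matroid α) (S : Set α) : Set α :=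
  S \ M.inA S

/-- `I` is internally related to the basis `B` if `I = B \ Y` for some `Y ⊆ IA(B)`. -/
def Matroid.IntRelated [LinearOrder α] (M : Matroid α) (I B : Set α) : Prop :=
  M.IsBase B ∧ ∃ Y ⊆ M.inA B, I = B \ Y

/-- The external/internal order on independent sets. -/
def Matroid.extIntLE [LinearOrder α] (M : Matroid α) (I J : Set α) : Prop :=
  ((∃ B, M.IntRelated I B ∧ M.IntRelated J B) ∧ I ⊆ J) ∨
  ((¬ ∃ B, M.IntRelated I B ∧ M.IntRelated J B) ∧
    (I \ M.inA I) ∪ M.exA I ⊆ (J \ M.inA J) ∪ M.exA J)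

/-! With respect to an independent set `S`, an element `e ∉ S` is externally active
exactly when it is spanned by the elements of `S` below it. Dually, `a ∈ B` is internally active
when it is spanned in `M✶` by the elements of `E \ B` below `a`. If every internally passive
element of `A` lies in `B`, then every element of `E \ B` below `a` either lies in `E \ A` or is
internally active in `A`, hence is spanned in `M✶` by the elements of `E \ A` below `a`. So an
element of `A` that is internally active in `B` is internally active in `A`. -/

namespace Matroid

variable {M : Matroid α} {C S B : Set α} {e a : α}

lemma cct_iff_isCircuit : M.Cct C ↔ M.IsCircuit C :=
  minimal_iff_forall_ssubset.symm

lemma Indep.mem_exA_iff [LinearOrder α] (hS : M.Indep S) (he : e ∈ M.E \ S) :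
    e ∈ M.exA S ↔ e ∈ M.closure (S ∩ Iio e) := by
  constructor
  · rintro ⟨-, C, hC, hCS, hCe⟩
    rw [cct_iff_isCircuit] at hC
    have heC : e ∈ C := by
      by_contra heC
      exact hC.not_indep
        (hS.subset fun x hx ↦ (hCS hx).resolve_left (ne_of_mem_of_not_mem hx heC))
    have hCS' : C \ {e} ⊆ S ∩ Iio e := fun x ⟨hxC, hxe⟩ ↦
      ⟨(hCS hxC).resolve_left hxe, lt_of_le_of_ne (hCe x hxC) hxe⟩
    exact M.closure_mono hCS' (hC.mem_closure_sdiff_singleton_of_mem heC)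
  · intro hcl
    have heS : e ∉ S ∩ Iio e := fun h ↦ he.2 h.1
    refine ⟨he, M.fundCircuit e (S ∩ Iio e), ?_, ?_, fun f hf ↦ ?_⟩
    · exact cct_iff_isCircuit.2 ((hS.subset inter_subset_left).fundCircuit_isCircuit hcl heS)
    · exact (M.fundCircuit_subset_insert e _).trans (insert_subset_insert inter_subset_left)
    · rcases M.fundCircuit_subset_insert e _ hf with rfl | hf
      · exact le_rfl
      · exact hf.2.le

lemma IsBase.mem_inA_iff [LinearOrder α] (hB : M.IsBase B) (haB : a ∈ B) :
    a ∈ M.inA B ↔ a ∈ M✶.closure ((M.E \ B) ∩ Iio a) := by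
  rw [← hB.compl_isBase_dual.indep.mem_exA_iff ⟨hB.subset_ground haB, fun h ↦ h.2 haB⟩]
  exact and_iff_right haB

lemma IsBase.mem_inA_of_mem_inA_of_diff_inA_subset [LinearOrder α] {A : Set α}
    (hA : M.IsBase A) (hB : M.IsBase B) (hAB : A \ M.inA A ⊆ B) (haA : a ∈ A)
    (haB : a ∈ M.inA B) : a ∈ M.inA A := by
  have hspan : (M.E \ B) ∩ Iio a ⊆ M✶.closure ((M.E \ A) ∩ Iio a) := by
    rintro i ⟨⟨hiE, hiB⟩, hia⟩
    by_cases hiA : i ∈ A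
    · have hi : i ∈ M.inA A := by_contra fun hi ↦ hiB (hAB ⟨hiA, hi⟩)
      rw [hA.mem_inA_iff hiA] at hi
      exact M✶.closure_mono (inter_subset_inter_right _ fun x hx ↦ lt_trans hx hia) hi
    · exact M✶.subset_closure _ (inter_subset_left.trans sdiff_subset) ⟨⟨hiE, hiA⟩, hia⟩
  rw [hA.mem_inA_iff haA]
  rw [hB.mem_inA_iff haB.1] at haB
  exact M✶.closure_subset_closure_of_subset_closure hspan haB

end Matroid

theorem internal_order_tfae_general [LinearOrder α] (M : Matroid α)
    (A B : Set α) (hA : M.IsBase A) (hB : M.IsBase B) :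
    A \ M.inA A ⊆ B ↔ A \ M.inA A ⊆ B \ M.inA B :=
  ⟨fun h _ ha ↦ ⟨h ha, fun haB ↦ ha.2 (hA.mem_inA_of_mem_inA_of_diff_inA_subset hB h ha.1 haB)⟩,
    fun h ↦ h.trans sdiff_subset⟩

/-- The two equivalent conditions defining Las Vergnas's internal order on bases. -/
theorem internal_order_tfae [LinearOrder α] (M : Matroid α) [M.Finite]
    (A B : Set α) (hA : M.IsBase A) (hB : M.IsBase B) :
    A \ M.inA A ⊆ B ↔ A \ M.inA A ⊆ B \ M.inA B :=
  internal_order_tfae_general M A B hA hB
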